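/- arXiv:1907.04004 — 5 statements merged into one kernel-verified Lean document; each statement's English description precedes it below -/
import Mathlib

section
/- Under the point-exposure assumptions (consistency, exchangeability, missing-at-random, missingness positivity), the incremental intervention mean is identified by the observed-data functional: ψ(δ) = E[ (δ·π·μ₁ + (1 − π)·μ₀) / (δ·π + 1 − π) ], where ψ(δ) = E[ q·Y¹ + (1 − q)·Y⁰ ] with q = δπ/(δπ + 1 − π). -/
/-!
By exchangeability, conditioning an outcome `Yᵃ` on `σ(X, A)` gives the same as conditioning on
`σ(X)`; by missing-at-random, `E[R Yᵃ | X, A] = E[R | X, A] · E[Yᵃ | X, A]`. Towering these two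
facts down to `σ(X)` gives `E[1{A=a} R Yᵃ | X] = E[Yᵃ | X] · E[1{A=a} R | X]`, and positivity
gives `E[1{A=a} R | X] ≥ ε · P(A = a | X)`, so `μₐ = E[Yᵃ | X]` wherever the arm `a` has positive
propensity. As the incremental weight `q` is `σ(X)`-measurable,
`ψ(δ) = E[q · E[Y¹ | X] + (1 - q) · E[Y⁰ | X]]`, and substituting `μₐ` on the arms where it is
identified gives the observed-data functional.
-/

open MeasureTheory ProbabilityTheory MeasurableSpace

namespace ProbabilityTheory

variable {Ω : Type*} {m m₂ mΩ : MeasurableSpace Ω} {μ : Measure Ω} [IsFiniteMeasure μ]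

theorem condExp_mul_mul_eq_of_condExp_mul_eq {B R Z : Ω → ℝ} (hm : m ≤ m₂) (hm₂ : m₂ ≤ mΩ)
    (hB : StronglyMeasurable[m₂] B) (hR : Integrable R μ) (hRZ : Integrable (R * Z) μ)
    (hBR : Integrable (B * R) μ) (hBRZ : Integrable (B * (R * Z)) μ)
    (h_mul : μ[R * Z | m₂] =ᵐ[μ] μ[R | m₂] * μ[Z | m₂]) (h_eq : μ[Z | m₂] =ᵐ[μ] μ[Z | m]) :
    μ[B * (R * Z) | m] =ᵐ[μ] μ[Z | m] * μ[B * R | m] := by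
  have h_inner : μ[B * (R * Z) | m₂] =ᵐ[μ] μ[Z | m] * μ[B * R | m₂] := by
    filter_upwards [condExp_mul_of_stronglyMeasurable_left hB hBRZ hRZ,
      condExp_mul_of_stronglyMeasurable_left hB hBR hR, h_mul, h_eq] with ω h₁ h₂ h₃ h₄
    simp only [Pi.mul_apply] at h₁ h₂ h₃ ⊢
    rw [h₁, h₂, h₃, h₄]
    ring
  calc μ[B * (R * Z) | m]
      =ᵐ[μ] μ[μ[B * (R * Z) | m₂] | m] := (condExp_condExp_of_le hm hm₂).symm
    _ =ᵐ[μ] μ[μ[Z | m] * μ[B * R | m₂] | m] := condExp_congr_ae h_inner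
    _ =ᵐ[μ] μ[Z | m] * μ[μ[B * R | m₂] | m] :=
      condExp_mul_of_stronglyMeasurable_left stronglyMeasurable_condExp
        (integrable_condExp.congr h_inner) integrable_condExp
    _ =ᵐ[μ] μ[Z | m] * μ[B * R | m] := (condExp_condExp_of_le hm hm₂).mul_left

theorem const_smul_condExp_le_condExp_mul {B R : Ω → ℝ} {ε : ℝ} (hm : m ≤ m₂) (hm₂ : m₂ ≤ mΩ)
    (hB : StronglyMeasurable[m₂] B) (hB_nonneg : 0 ≤ᵐ[μ] B) (hBi : Integrable B μ)
    (hR : Integrable R μ) (hBR : Integrable (B * R) μ) (hε : ∀ᵐ ω ∂μ, ε ≤ μ[R | m₂] ω) :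
    ε • μ[B | m] ≤ᵐ[μ] μ[B * R | m] := by
  have h_le : ε • B ≤ᵐ[μ] μ[B * R | m₂] := by
    filter_upwards [condExp_mul_of_stronglyMeasurable_left hB hBR hR, hB_nonneg, hε]
      with ω h_eq hω hεω
    rw [h_eq, Pi.smul_apply, Pi.mul_apply, smul_eq_mul, mul_comm]
    exact mul_le_mul_of_nonneg_left hεω hω
  filter_upwards [condExp_smul (μ := μ) ε B m, condExp_mono (m := m) (hBi.smul ε)
    integrable_condExp h_le, condExp_condExp_of_le (μ := μ) (f := B * R) hm hm₂]
    with ω h_smul h_mono h_tower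
  rw [← h_smul, ← h_tower]
  exact h_mono

theorem integral_mul_condExp {q Z : Ω → ℝ} {c : ℝ} (hm : m ≤ mΩ) (hq : StronglyMeasurable[m] q)
    (hq_bound : ∀ᵐ ω ∂μ, ‖q ω‖ ≤ c) (hZ : Integrable Z μ) :
    ∫ ω, q ω * μ[Z | m] ω ∂μ = ∫ ω, q ω * Z ω ∂μ :=
  (integral_congr_ae (condExp_stronglyMeasurable_mul_of_bound hm hq hZ c hq_bound)).symm.trans
    (integral_condExp hm)

theorem integral_incremental_eq_integral_regression {π μ₁ μ₀ Y₁ Y₀ : Ω → ℝ} {δ : ℝ}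
    (hm : m ≤ mΩ) (hδ : 0 < δ) (hπ : Measurable[m] π) (hπ01 : ∀ ω, π ω ∈ Set.Icc 0 1)
    (hY₁ : Integrable Y₁ μ) (hY₀ : Integrable Y₀ μ)
    (h₁ : π * μ₁ =ᵐ[μ] π * μ[Y₁ | m]) (h₀ : (1 - π) * μ₀ =ᵐ[μ] (1 - π) * μ[Y₀ | m]) :
    ∫ ω, ((δ * π ω / (δ * π ω + 1 - π ω)) * Y₁ ω
          + (1 - δ * π ω / (δ * π ω + 1 - π ω)) * Y₀ ω) ∂μ
      = ∫ ω, (δ * π ω * μ₁ ω + (1 - π ω) * μ₀ ω) / (δ * π ω + 1 - π ω) ∂μ := by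
  have h_denom (ω : Ω) : 0 < δ * π ω + 1 - π ω := by
    obtain ⟨h0, h1⟩ := hπ01 ω
    rcases h1.lt_or_eq with h | h
    · nlinarith
    · rw [h]; linarith
  set q : Ω → ℝ := fun ω => δ * π ω / (δ * π ω + 1 - π ω)
  have hq : StronglyMeasurable[m] q :=
    ((hπ.const_mul δ).div (((hπ.const_mul δ).add_const 1).sub hπ)).stronglyMeasurable
  have hq01 (ω : Ω) : q ω ∈ Set.Icc 0 1 :=
    ⟨div_nonneg (mul_nonneg hδ.le (hπ01 ω).1) (h_denom ω).le,
      (div_le_one (h_denom ω)).2 (by linarith [(hπ01 ω).2])⟩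
  have hq_bound : ∀ᵐ ω ∂μ, ‖q ω‖ ≤ 1 :=
    .of_forall fun ω => abs_le.2 ⟨by linarith [(hq01 ω).1], (hq01 ω).2⟩
  have hq'_bound : ∀ᵐ ω ∂μ, ‖1 - q ω‖ ≤ 1 :=
    .of_forall fun ω => abs_le.2 ⟨by linarith [(hq01 ω).2], by linarith [(hq01 ω).1]⟩
  have hq' : StronglyMeasurable[m] fun ω => 1 - q ω := stronglyMeasurable_const.sub hq
  have hq_ae := (hq.mono hm).aestronglyMeasurable (μ := μ)
  have hq'_ae := (hq'.mono hm).aestronglyMeasurable (μ := μ)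
  calc ∫ ω, (q ω * Y₁ ω + (1 - q ω) * Y₀ ω) ∂μ
      = ∫ ω, q ω * Y₁ ω ∂μ + ∫ ω, (1 - q ω) * Y₀ ω ∂μ :=
        integral_add (hY₁.bdd_mul hq_ae hq_bound) (hY₀.bdd_mul hq'_ae hq'_bound)
    _ = ∫ ω, q ω * μ[Y₁ | m] ω ∂μ + ∫ ω, (1 - q ω) * μ[Y₀ | m] ω ∂μ := by
        rw [integral_mul_condExp hm hq hq_bound hY₁, integral_mul_condExp hm hq' hq'_bound hY₀]
    _ = ∫ ω, (q ω * μ[Y₁ | m] ω + (1 - q ω) * μ[Y₀ | m] ω) ∂μ :=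
        (integral_add (integrable_condExp.bdd_mul hq_ae hq_bound)
          (integrable_condExp.bdd_mul hq'_ae hq'_bound)).symm
    _ = ∫ ω, (δ * π ω * μ₁ ω + (1 - π ω) * μ₀ ω) / (δ * π ω + 1 - π ω) ∂μ := by
        refine integral_congr_ae ?_
        filter_upwards [h₁, h₀] with ω h₁ω h₀ω
        simp only [Pi.mul_apply, Pi.sub_apply, Pi.one_apply] at h₁ω h₀ω
        simp only [q]
        field_simp [(h_denom ω).ne']
        linear_combination -δ * h₁ω - h₀ω

variable [StandardBorelSpace Ω] {hm : m ≤ mΩ}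

theorem CondIndepFun.ae_indepFun_condExpKernel {β β' : Type*} {_ : MeasurableSpace β}
    {_ : MeasurableSpace β'} [CountableOrCountablyGenerated Ω (β × β')] {f : Ω → β} {g : Ω → β'}
    (hf : Measurable f) (hg : Measurable g) (h : CondIndepFun m hm f g μ) :
    ∀ᵐ ω ∂μ, IndepFun f g (condExpKernel μ m ω) := by
  have h_map := (condIndepFun_iff_map_prod_eq_prod_map_map hf hg).1 h
  filter_upwards [ae_of_ae_trim hm h_map] with ω hω
  rw [indepFun_iff_map_prod_eq_prod_map_map hf.aemeasurable hg.aemeasurable]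
  simpa [Kernel.map_apply _ (hf.prodMk hg), Kernel.map_apply _ hf, Kernel.map_apply _ hg,
    Kernel.prod_apply] using hω

theorem CondIndepFun.condExp_mul {f g : Ω → ℝ} (hf : Measurable f) (hg : Measurable g)
    (h : CondIndepFun m hm f g μ) (hfi : Integrable f μ) (hgi : Integrable g μ)
    (hfgi : Integrable (f * g) μ) :
    μ[f * g | m] =ᵐ[μ] μ[f | m] * μ[g | m] := by
  filter_upwards [condExp_ae_eq_integral_condExpKernel hm hfgi,
    condExp_ae_eq_integral_condExpKernel hm hfi, condExp_ae_eq_integral_condExpKernel hm hgi,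
    h.ae_indepFun_condExpKernel hf hg] with ω hfg_eq hf_eq hg_eq hω
  rw [hfg_eq, Pi.mul_apply, hf_eq, hg_eq]
  exact hω.integral_mul_eq_mul_integral hf.aestronglyMeasurable hg.aestronglyMeasurable

theorem CondIndepFun.setIntegral_condExp_inter_preimage {γ : Type*} [MeasurableSpace γ]
    {A : Ω → γ} {Z : Ω → ℝ} (hA : Measurable A) (hZ : Measurable Z) (hZi : Integrable Z μ)
    (h : CondIndepFun m hm A Z μ) {s : Set Ω} {t : Set γ} (hs : MeasurableSet[m] s)
    (ht : MeasurableSet t) :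
    ∫ ω in s ∩ A ⁻¹' t, μ[Z | m] ω ∂μ = ∫ ω in s ∩ A ⁻¹' t, Z ω ∂μ := by
  set χ : Ω → ℝ := t.indicator 1 ∘ A
  have hχ : Measurable χ := (measurable_one.indicator ht).comp hA
  have hχ_bound : ∀ ω, ‖χ ω‖ ≤ 1 := fun ω => by
    by_cases hω : A ω ∈ t <;> simp [χ, hω]
  have hχi : Integrable χ μ := .of_bound hχ.aestronglyMeasurable 1 (.of_forall hχ_bound)
  have h_indicator (f : Ω → ℝ) : (A ⁻¹' t).indicator f = χ * f := by
    funext ω; by_cases hω : A ω ∈ t <;> simp [χ, hω]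
  have hχZ : Integrable (χ * Z) μ := h_indicator Z ▸ hZi.indicator (hA ht)
  have hχν : Integrable (χ * μ[Z | m]) μ := h_indicator _ ▸ integrable_condExp.indicator (hA ht)
  have h_indep : CondIndepFun m hm χ Z μ := h.comp (measurable_one.indicator ht) measurable_id
  rw [← setIntegral_indicator (hA ht), ← setIntegral_indicator (hA ht), h_indicator,
    h_indicator, ← setIntegral_condExp hm hχν hs, ← setIntegral_condExp hm hχZ hs]
  refine setIntegral_congr_ae (hm s hs) ?_
  filter_upwards [condExp_mul_of_stronglyMeasurable_right stronglyMeasurable_condExp hχν hχi,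
    h_indep.condExp_mul hχ hZ hχi hZi hχZ] with ω h₁ h₂ _
  rw [h₁, h₂]

theorem condExp_comap_prodMk_eq_of_condIndepFun {α γ : Type*} [mα : MeasurableSpace α]
    [mγ : MeasurableSpace γ] {X : Ω → α} {A : Ω → γ} {Z : Ω → ℝ} (hX : Measurable X)
    (hA : Measurable A) (hZ : Measurable Z) (hZi : Integrable Z μ)
    (h : CondIndepFun (mα.comap X) hX.comap_le A Z μ) :
    μ[Z | (mα.prod mγ).comap fun ω => (X ω, A ω)] =ᵐ[μ] μ[Z | mα.comap X] := by
  have hXA : (mα.prod mγ).comap (fun ω => (X ω, A ω)) ≤ mΩ := (hX.prodMk hA).comap_le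
  have hX_le : mα.comap X ≤ (mα.prod mγ).comap fun ω => (X ω, A ω) :=
    Measurable.comap_le (f := X) (measurable_fst.comp (comap_measurable _))
  have h_gen : (mα.prod mγ).comap (fun ω => (X ω, A ω)) = generateFrom
      (Set.preimage (fun ω => (X ω, A ω))
        '' Set.image2 (· ×ˢ ·) {u : Set α | MeasurableSet u} {t : Set γ | MeasurableSet t}) := by
    rw [← comap_generateFrom, generateFrom_prod]; rfl
  refine (ae_eq_condExp_of_forall_setIntegral_eq hXA hZi
    (fun _ _ _ => integrable_condExp.integrableOn) (fun S hS _ => ?_)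
    (stronglyMeasurable_condExp.mono hX_le).aestronglyMeasurable).symm
  induction S, hS using induction_on_inter h_gen (isPiSystem_prod.comap _) with
  | empty => simp
  | basic S hS =>
    obtain ⟨_, ⟨u, hu, t, ht, rfl⟩, rfl⟩ := hS
    exact h.setIntegral_condExp_inter_preimage hA hZ hZi ⟨u, hu, rfl⟩ ht
  | compl S hS ih =>
    have h₁ := integral_add_compl (hXA S hS)
      (integrable_condExp (m := mα.comap X) (μ := μ) (f := Z))
    have h₂ := integral_add_compl (hXA S hS) hZi
    have h₃ := integral_condExp (m := mα.comap X) (μ := μ) (f := Z) hX.comap_le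
    linarith [ih (measure_lt_top _ _)]
  | iUnion S hS_disj hS ih =>
    rw [integral_iUnion (fun i => hXA _ (hS i)) hS_disj integrable_condExp.integrableOn,
      integral_iUnion (fun i => hXA _ (hS i)) hS_disj hZi.integrableOn]
    exact tsum_congr fun i => ih i (measure_lt_top _ _)

/-- `μB` is determined only where `μ[B * R | m] > 0`, a set which by positivity contains the set
where the arm weight `w = μ[B | m]` is positive. -/
theorem mul_ae_eq_mul_condExp_of_regression {B R Y Z μB w : Ω → ℝ} {ε : ℝ} (hm : m ≤ m₂)
    {hm₂ : m₂ ≤ mΩ} (hB : StronglyMeasurable[m₂] B) (hB01 : ∀ ω, B ω ∈ Set.Icc 0 1)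
    (hR : Measurable R) (hR1 : ∀ ω, |R ω| ≤ 1) (hZ : Measurable Z) (hZi : Integrable Z μ)
    (h_mar : CondIndepFun m₂ hm₂ R Z μ) (h_eq : μ[Z | m₂] =ᵐ[μ] μ[Z | m])
    (hε : 0 < ε) (h_pos : ∀ᵐ ω ∂μ, ε ≤ μ[R | m₂] ω) (hw : w =ᵐ[μ] μ[B | m])
    (hYZ : ∀ ω, B ω * Y ω = B ω * Z ω)
    (hμB : μB * μ[B * R | m] =ᵐ[μ] μ[Y * (B * R) | m]) :
    w * μB =ᵐ[μ] w * μ[Z | m] := by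
  have hB_bound : ∀ᵐ ω ∂μ, ‖B ω‖ ≤ 1 :=
    .of_forall fun ω => abs_le.2 ⟨by linarith [(hB01 ω).1], (hB01 ω).2⟩
  have hB_ae := (hB.mono hm₂).aestronglyMeasurable (μ := μ)
  have hRi : Integrable R μ := .of_bound hR.aestronglyMeasurable 1 (.of_forall hR1)
  have hRZ : Integrable (R * Z) μ := hZi.bdd_mul hR.aestronglyMeasurable (.of_forall hR1)
  have hBR : Integrable (B * R) μ := hRi.bdd_mul hB_ae hB_bound
  have hBRZ : Integrable (B * (R * Z)) μ := hRZ.bdd_mul hB_ae hB_bound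
  have h_Y : Y * (B * R) = B * (R * Z) := by
    funext ω
    simp only [Pi.mul_apply]
    linear_combination R ω * hYZ ω
  rw [h_Y] at hμB
  filter_upwards [hμB, hw, condExp_nonneg (m := m) (.of_forall fun ω => (hB01 ω).1),
    condExp_mul_mul_eq_of_condExp_mul_eq hm hm₂ hB hRi hRZ hBR hBRZ
      (h_mar.condExp_mul hR hZ hRi hZi hRZ) h_eq,
    const_smul_condExp_le_condExp_mul hm hm₂ hB (.of_forall fun ω => (hB01 ω).1)
      (.of_bound hB_ae 1 hB_bound) hRi hBR h_pos] with ω h_reg h_w h_nonneg h_tower h_le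
  simp only [Pi.mul_apply, Pi.smul_apply, Pi.zero_apply, smul_eq_mul] at h_nonneg h_le ⊢
  rw [h_w]
  rcases h_nonneg.eq_or_lt with h_zero | h_wpos
  · rw [← h_zero, zero_mul, zero_mul]
  · rw [mul_right_cancel₀ (lt_of_lt_of_le (mul_pos hε h_wpos) h_le).ne' (h_reg.trans h_tower)]

end ProbabilityTheory

theorem incremental_identification_point_exposure_general
    {Ω : Type*} [mΩ : MeasurableSpace Ω] [StandardBorelSpace Ω]
    (P : Measure Ω) [IsProbabilityMeasure P]
    (d : ℕ) (X : Ω → (Fin d → ℝ)) (hX : Measurable X)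
    (A R : Ω → ℝ) (hA : Measurable A) (hR : Measurable R)
    (hA01 : ∀ ω, A ω = 0 ∨ A ω = 1) (hR01 : ∀ ω, R ω = 0 ∨ R ω = 1)
    (Y0 Y1 : Ω → ℝ) (hY0 : Measurable Y0) (hY1 : Measurable Y1)
    (C : ℝ) (hbd : ∀ ω, |Y0 ω| ≤ C ∧ |Y1 ω| ≤ C)
    -- exchangeability: A ⟂ (Y⁰, Y¹) given σ(X)
    (hexch : CondIndepFun (MeasurableSpace.comap X inferInstance) hX.comap_le
      A (fun ω => (Y0 ω, Y1 ω)) P)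
    -- missing-at-random: R ⟂ (Y⁰, Y¹) given σ(X, A)
    (hmar : CondIndepFun (MeasurableSpace.comap (fun ω => (X ω, A ω)) inferInstance)
      (hX.prodMk hA).comap_le R (fun ω => (Y0 ω, Y1 ω)) P)
    -- missingness positivity: E[R | σ(X,A)] ≥ ε > 0 a.s.
    (ε : ℝ) (hε : 0 < ε)
    (hpos : ∀ᵐ ω ∂P,
      ε ≤ (P[R | MeasurableSpace.comap (fun ω => (X ω, A ω)) inferInstance]) ω)
    (δ : ℝ) (hδ : 0 < δ)
    -- π: a σ(X)-measurable version of E[A | σ(X)] with values in [0,1]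
    (π : Ω → ℝ) (hπmeas : Measurable[MeasurableSpace.comap X inferInstance] π)
    (hπ01 : ∀ ω, π ω ∈ Set.Icc (0:ℝ) 1)
    (hπ : π =ᵐ[P] P[A | MeasurableSpace.comap X inferInstance])
    -- μ₁, μ₀: σ(X)-measurable outcome regressions among the observed, characterized by
    -- μₐ · E[1{A=a}·R | σ(X)] = E[Y·1{A=a}·R | σ(X)] a.s., with Y = A·Y¹ + (1−A)·Y⁰
    (μ₁ μ₀ : Ω → ℝ)
    (hμ₁ : (fun ω => μ₁ ω *
        (P[fun ω' => A ω' * R ω' | MeasurableSpace.comap X inferInstance]) ω)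
      =ᵐ[P] P[fun ω' => (A ω' * Y1 ω' + (1 - A ω') * Y0 ω') * (A ω' * R ω') |
          MeasurableSpace.comap X inferInstance])
    (hμ₀ : (fun ω => μ₀ ω *
        (P[fun ω' => (1 - A ω') * R ω' | MeasurableSpace.comap X inferInstance]) ω)
      =ᵐ[P] P[fun ω' => (A ω' * Y1 ω' + (1 - A ω') * Y0 ω') * ((1 - A ω') * R ω') |
          MeasurableSpace.comap X inferInstance]) :
    ∫ ω, ((δ * π ω / (δ * π ω + 1 - π ω)) * Y1 ω
          + (1 - δ * π ω / (δ * π ω + 1 - π ω)) * Y0 ω) ∂P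
      = ∫ ω, (δ * π ω * μ₁ ω + (1 - π ω) * μ₀ ω) / (δ * π ω + 1 - π ω) ∂P := by
  have hX_le : MeasurableSpace.comap X inferInstance
      ≤ MeasurableSpace.comap (fun ω => (X ω, A ω)) inferInstance :=
    Measurable.comap_le (f := X) (measurable_fst.comp (comap_measurable _))
  have hA_meas :
      StronglyMeasurable[MeasurableSpace.comap (fun ω => (X ω, A ω)) inferInstance] A :=
    (measurable_snd.comp (comap_measurable _)).stronglyMeasurable
  have hA_mem (ω : Ω) : A ω ∈ Set.Icc 0 1 := by rcases hA01 ω with h | h <;> simp [h]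
  have hR1 (ω : Ω) : |R ω| ≤ 1 := by rcases hR01 ω with h | h <;> simp [h]
  have hY0i : Integrable Y0 P :=
    .of_bound hY0.aestronglyMeasurable C (.of_forall fun ω => (hbd ω).1)
  have hY1i : Integrable Y1 P :=
    .of_bound hY1.aestronglyMeasurable C (.of_forall fun ω => (hbd ω).2)
  have hπ_compl : 1 - π =ᵐ[P] P[1 - A | MeasurableSpace.comap X inferInstance] := by
    have hAi : Integrable A P := .of_bound hA.aestronglyMeasurable 1
      (.of_forall fun ω => abs_le.2 ⟨by linarith [(hA_mem ω).1], (hA_mem ω).2⟩)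
    filter_upwards [hπ, condExp_sub (f := fun _ => (1 : ℝ)) (integrable_const 1) hAi
      (MeasurableSpace.comap X inferInstance)] with ω h₁ h₂
    change 1 - π ω = P[(fun _ => (1 : ℝ)) - A | MeasurableSpace.comap X inferInstance] ω
    rw [h₂, Pi.sub_apply, condExp_const hX.comap_le, h₁]
  have h₁ := mul_ae_eq_mul_condExp_of_regression hX_le hA_meas hA_mem hR hR1 hY1 hY1i
    (hmar.comp measurable_id measurable_snd)
    (condExp_comap_prodMk_eq_of_condIndepFun hX hA hY1 hY1i
      (hexch.comp measurable_id measurable_snd))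
    hε hpos hπ (Y := fun ω => A ω * Y1 ω + (1 - A ω) * Y0 ω)
    (fun ω => by rcases hA01 ω with h | h <;> simp [h]) hμ₁
  have h₀ := mul_ae_eq_mul_condExp_of_regression hX_le (B := 1 - A)
    (stronglyMeasurable_const.sub hA_meas)
    (fun ω => show 1 - A ω ∈ Set.Icc (0 : ℝ) 1 from
      ⟨by linarith [(hA_mem ω).2], by linarith [(hA_mem ω).1]⟩)
    hR hR1 hY0 hY0i (hmar.comp measurable_id measurable_fst)
    (condExp_comap_prodMk_eq_of_condIndepFun hX hA hY0 hY0i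
      (hexch.comp measurable_id measurable_fst))
    hε hpos hπ_compl (Y := fun ω => A ω * Y1 ω + (1 - A ω) * Y0 ω)
    (fun ω => by rcases hA01 ω with h | h <;> simp [h]) hμ₀
  exact integral_incremental_eq_integral_regression hX.comap_le hδ hπmeas hπ01 hY1i hY0i h₁ h₀

/-- Identification of the incremental intervention effect in a point-exposure study (`T = 1`)
with outcome missingness.  Under consistency (`Y = A·Y¹ + (1−A)·Y⁰`), exchangeability
(`A ⟂ (Y⁰,Y¹) | σ(X)`), missing-at-random (`R ⟂ (Y⁰,Y¹) | σ(X,A)`) and missingness positivity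
(`E[R | σ(X,A)] ≥ ε > 0` a.s.), the incremental mean
`ψ(δ) = E[q·Y¹ + (1−q)·Y⁰]` with `q = δπ/(δπ + 1 − π)` equals the observed-data functional
`E[(δ·π·μ₁ + (1−π)·μ₀)/(δ·π + 1 − π)]`. -/
theorem incremental_identification_point_exposure
    {Ω : Type*} [mΩ : MeasurableSpace Ω] [StandardBorelSpace Ω]
    (P : Measure Ω) [IsProbabilityMeasure P]
    (d : ℕ) (X : Ω → (Fin d → ℝ)) (hX : Measurable X)
    (A R : Ω → ℝ) (hA : Measurable A) (hR : Measurable R)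
    (hA01 : ∀ ω, A ω = 0 ∨ A ω = 1) (hR01 : ∀ ω, R ω = 0 ∨ R ω = 1)
    (Y0 Y1 : Ω → ℝ) (hY0 : Measurable Y0) (hY1 : Measurable Y1)
    (C : ℝ) (hbd : ∀ ω, |Y0 ω| ≤ C ∧ |Y1 ω| ≤ C)
    -- exchangeability: A ⟂ (Y⁰, Y¹) given σ(X)
    (hexch : CondIndepFun (MeasurableSpace.comap X inferInstance) hX.comap_le
      A (fun ω => (Y0 ω, Y1 ω)) P)
    -- missing-at-random: R ⟂ (Y⁰, Y¹) given σ(X, A)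
    (hmar : CondIndepFun (MeasurableSpace.comap (fun ω => (X ω, A ω)) inferInstance)
      (hX.prodMk hA).comap_le R (fun ω => (Y0 ω, Y1 ω)) P)
    -- missingness positivity: E[R | σ(X,A)] ≥ ε > 0 a.s.
    (ε : ℝ) (hε : 0 < ε)
    (hpos : ∀ᵐ ω ∂P,
      ε ≤ (P[R | MeasurableSpace.comap (fun ω => (X ω, A ω)) inferInstance]) ω)
    (δ : ℝ) (hδ : 0 < δ)
    -- π: a σ(X)-measurable version of E[A | σ(X)] with values in [0,1]
    (π : Ω → ℝ) (hπmeas : Measurable[MeasurableSpace.comap X inferInstance] π)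
    (hπ01 : ∀ ω, π ω ∈ Set.Icc (0:ℝ) 1)
    (hπ : π =ᵐ[P] P[A | MeasurableSpace.comap X inferInstance])
    -- μ₁, μ₀: σ(X)-measurable outcome regressions among the observed, characterized by
    -- μₐ · E[1{A=a}·R | σ(X)] = E[Y·1{A=a}·R | σ(X)] a.s., with Y = A·Y¹ + (1−A)·Y⁰
    (μ₁ μ₀ : Ω → ℝ)
    (hμ₁meas : Measurable[MeasurableSpace.comap X inferInstance] μ₁)
    (hμ₀meas : Measurable[MeasurableSpace.comap X inferInstance] μ₀)
    (hμ₁ : (fun ω => μ₁ ω *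
        (P[fun ω' => A ω' * R ω' | MeasurableSpace.comap X inferInstance]) ω)
      =ᵐ[P] P[fun ω' => (A ω' * Y1 ω' + (1 - A ω') * Y0 ω') * (A ω' * R ω') |
          MeasurableSpace.comap X inferInstance])
    (hμ₀ : (fun ω => μ₀ ω *
        (P[fun ω' => (1 - A ω') * R ω' | MeasurableSpace.comap X inferInstance]) ω)
      =ᵐ[P] P[fun ω' => (A ω' * Y1 ω' + (1 - A ω') * Y0 ω') * ((1 - A ω') * R ω') |
          MeasurableSpace.comap X inferInstance]) :
    ∫ ω, ((δ * π ω / (δ * π ω + 1 - π ω)) * Y1 ω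
          + (1 - δ * π ω / (δ * π ω + 1 - π ω)) * Y0 ω) ∂P
      = ∫ ω, (δ * π ω * μ₁ ω + (1 - π ω) * μ₀ ω) / (δ * π ω + 1 - π ω) ∂P :=
  incremental_identification_point_exposure_general (mΩ := mΩ) P d X hX A R hA hR hA01 hR01 Y0 Y1
    hY0 hY1 C hbd hexch hmar ε hε hpos δ hδ π hπmeas hπ01 hπ μ₁ μ₀ hμ₁ hμ₀
end

section
/- In the simplified infinite-time-horizon setting, for every δ > 0 the incremental-effect IPW estimator satisfies the g-formula representation E[ψ̂_inc] = Σ_{ā ∈ {0,1}^T} (∏_{t=1}^T q_δ(a_t))·E[Y^ā], where q_δ(a) = (a·δp + (1 − a)(1 − p))/(δp + 1 − p); since q_δ(1) + q_δ(0) = 1, these weights sum to one over ā ∈ {0,1}^T, and consequently |E[ψ̂_inc]| ≤ b_u. -/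
open MeasureTheory ProbabilityTheory

noncomputable section

/-- Codomain of the joint family `(A₁, …, A_T, U)`: index `some t` carries the binary
treatment `A_t` (valued in `Bool`) and index `none` carries the exogenous variable `U`. -/
def Cod (E : Type) (T : ℕ) : Option (Fin T) → Type
  | none => E
  | some _ => Bool

instance CodMeas (E : Type) [MeasurableSpace E] (T : ℕ) : ∀ i, MeasurableSpace (Cod E T i)
  | none => inferInstanceAs (MeasurableSpace E)
  | some _ => inferInstanceAs (MeasurableSpace Bool)

/-- The joint family `(A₁, …, A_T, U)` bundled as a single dependently-typed family of random
variables, used to state that `(A₁, …, A_T, U)` is mutually independent. -/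
def fam {Ω : Type*} {E : Type} (T : ℕ) (A : Fin T → Ω → Bool) (U : Ω → E) :
    (i : Option (Fin T)) → Ω → Cod E T i
  | none => U
  | some t => A t

/-! Split the expectation over the finitely many treatment histories `a`. On `{A = a}` the
estimator's weight is the constant `∏ₜ incRatio δ p (a t)`, and since `A` is independent of
`U`, `E[1{A = a} f(a, U)] = P(A = a) E[f(a, U)]`; independence of the `A_t` gives
`P(A = a) = ∏ₜ π(a_t)`, and `π(b) · incRatio δ p b = q_δ(b)`. The weights `∏ₜ q_δ(a_t)` sum
to `∏ₜ (q_δ(1) + q_δ(0)) = 1`, so `E[ψ̂_inc]` is a convex combination of the `E[f(a, U)]`. -/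

section

variable {Ω : Type*} [MeasurableSpace Ω] {P : Measure Ω}

theorem integral_eq_sum_measureReal_mul_of_indepFun {α E : Type*} [Fintype α]
    [MeasurableSpace α] [MeasurableSingletonClass α] [MeasurableSpace E]
    {X : Ω → α} {U : Ω → E} (hXU : IndepFun X U P) (hX : Measurable X) (hU : Measurable U)
    {g : α → E → ℝ} (hg : ∀ a, Measurable (g a))
    (hint : ∀ a, Integrable (fun ω => g a (U ω)) P) :
    ∫ ω, g (X ω) (U ω) ∂P = ∑ a, P.real (X ⁻¹' {a}) * ∫ ω, g a (U ω) ∂P := by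
  classical
  have hfiber : ∀ a, MeasurableSet (X ⁻¹' {a}) := fun a => hX (measurableSet_singleton a)
  have hsplit : (fun ω => g (X ω) (U ω))
      = fun ω => ∑ a, (X ⁻¹' {a}).indicator (fun ω => g a (U ω)) ω := by
    ext ω
    simp [Set.indicator_apply]
  rw [hsplit, integral_finsetSum _ fun a _ => (hint a).indicator (hfiber a)]
  refine Finset.sum_congr rfl fun a _ => ?_
  rw [integral_indicator (hfiber a)]
  exact Indep.setIntegral_eq_mul hX.comap_le hXU hU.aemeasurable
    ⟨{a}, measurableSet_singleton a, rfl⟩ (hg a).aestronglyMeasurable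

theorem iIndepFun.measureReal_preimage_singleton_eq_prod {ι : Type*} [Fintype ι]
    {β : ι → Type*} [∀ i, MeasurableSpace (β i)] [∀ i, MeasurableSingletonClass (β i)]
    {A : ∀ i, Ω → β i} (hA : iIndepFun A P) (a : ∀ i, β i) :
    P.real ((fun ω i => A i ω) ⁻¹' {a}) = ∏ i, P.real (A i ⁻¹' {a i}) := by
  have hinter : (fun ω i => A i ω) ⁻¹' {a} = ⋂ i, A i ⁻¹' {a i} := by
    ext ω
    simp [funext_iff]
  rw [hinter, measureReal_def,
    hA.meas_iInter fun i => ⟨{a i}, measurableSet_singleton (a i), rfl⟩, ENNReal.toReal_prod]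
  rfl

theorem measureReal_preimage_bool [IsProbabilityMeasure P] {A : Ω → Bool} (hA : Measurable A)
    {p : ℝ} (hp : 0 ≤ p) (hA1 : P {ω | A ω = true} = ENNReal.ofReal p) (b : Bool) :
    P.real (A ⁻¹' {b}) = if b then p else 1 - p := by
  have htrue : P.real (A ⁻¹' {true}) = p := by
    rw [measureReal_def, ← ENNReal.toReal_ofReal hp, ← hA1]
    rfl
  cases b
  · rw [show A ⁻¹' {false} = (A ⁻¹' {true})ᶜ by ext; simp,
      probReal_compl_eq_one_sub (hA (measurableSet_singleton true)), htrue]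
    rfl
  · exact htrue

end

theorem Fintype.sum_pi_prod_eq_one {ι β R : Type*} [Fintype ι] [DecidableEq ι] [Fintype β]
    [CommSemiring R] {q : β → R} (hq : ∑ b, q b = 1) :
    ∑ a : ι → β, ∏ i, q (a i) = 1 := by
  rw [← Fintype.prod_sum (fun _ b => q b)]
  simp [hq]

section

variable {Ω : Type*} [MeasurableSpace Ω] {P : Measure Ω} {E : Type} [MeasurableSpace E] {T : ℕ}
  {A : Fin T → Ω → Bool} {U : Ω → E}

theorem iIndepFun_of_iIndepFun_fam (h : iIndepFun (m := fun i => CodMeas E T i) (fam T A U) P) :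
    iIndepFun A P :=
  h.precomp (g := some) (Option.some_injective _)

theorem indepFun_of_iIndepFun_fam (h : iIndepFun (m := fun i => CodMeas E T i) (fam T A U) P)
    (hA : ∀ t, Measurable (A t)) (hU : Measurable U) :
    IndepFun (fun ω t => A t ω) U P := by
  have hfam : ∀ i, Measurable (fam T A U i) := by
    rintro (_ | t)
    · exact hU
    · exact hA t
  have hsplit := h.indepFun_finset (Finset.univ.image some) {none} (by simp) hfam
  have hU_coord : Measurable
      fun g : ∀ i : ({none} : Finset (Option (Fin T))), Cod E T i =>
        (g ⟨none, by simp⟩ : E) :=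
    measurable_pi_apply _
  exact hsplit.comp (φ := fun g t => g ⟨some t, by simp⟩)
    (measurable_pi_lambda _ fun t => measurable_pi_apply _) hU_coord

end

-- `incRatio δ p` is the per-time factor of `ψ̂_inc`, and `incWeight δ p` is `q_δ`.
def incRatio (δ p : ℝ) (b : Bool) : ℝ := (if b then δ else 1) / (δ * p + 1 - p)

def incWeight (δ p : ℝ) (b : Bool) : ℝ := (if b then δ * p else 1 - p) / (δ * p + 1 - p)

section

variable {δ p : ℝ}

theorem ite_mul_incRatio (b : Bool) :
    (if b then p else 1 - p) * incRatio δ p b = incWeight δ p b := by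
  cases b <;> simp only [incRatio, incWeight, Bool.false_eq_true, if_true, if_false] <;> ring

theorem incWeight_nonneg (hδ : 0 ≤ δ) (hp0 : 0 ≤ p) (hp1 : p ≤ 1) (b : Bool) :
    0 ≤ incWeight δ p b :=
  div_nonneg (by split <;> nlinarith) (by nlinarith)

theorem sum_incWeight (hc : δ * p + 1 - p ≠ 0) : ∑ b, incWeight δ p b = 1 := by
  rw [Fintype.sum_bool, incWeight, incWeight, if_pos rfl, if_neg Bool.false_ne_true, ← add_div,
    add_sub_assoc', div_self hc]

end

theorem inc_gformula_general
    {Ω : Type*} {E : Type} [MeasurableSpace Ω] [MeasurableSpace E]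
    (P : Measure Ω) [IsProbabilityMeasure P]
    (T : ℕ)
    (p : ℝ) (hp : p ∈ Set.Ioo (0:ℝ) 1)
    (A : Fin T → Ω → Bool) (U : Ω → E)
    (hAmeas : ∀ t, Measurable (A t)) (hUmeas : Measurable U)
    (hindep : iIndepFun (m := fun i => CodMeas E T i) (fam T A U) P)
    (hAp : ∀ t, P {ω | A t ω = true} = ENNReal.ofReal p)
    (f : (Fin T → Bool) → E → ℝ)
    (hf : Measurable (fun q : (Fin T → Bool) × E => f q.1 q.2))
    (bu : ℝ) (hfbd : ∀ a e, |f a e| ≤ bu)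
    (δ : ℝ) (hδ : 0 < δ) :
    (∫ ω, (∏ t, (if A t ω then δ else 1) / (δ * p + 1 - p)) * f (fun s => A s ω) (U ω) ∂P
      = ∑ a : Fin T → Bool,
          (∏ t, (if a t then δ * p else 1 - p) / (δ * p + 1 - p)) * ∫ ω, f a (U ω) ∂P)
    ∧ (∑ a : Fin T → Bool, ∏ t, (if a t then δ * p else 1 - p) / (δ * p + 1 - p) = 1)
    ∧ |∫ ω, (∏ t, (if A t ω then δ else 1) / (δ * p + 1 - p)) * f (fun s => A s ω) (U ω) ∂P|
        ≤ bu := by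
  obtain ⟨hp0, hp1⟩ := hp
  have hf_slice (a : Fin T → Bool) : Measurable (f a) :=
    hf.comp (measurable_const.prodMk measurable_id)
  have hY_int (a : Fin T → Bool) : Integrable (fun ω => f a (U ω)) P :=
    .of_bound ((hf_slice a).comp hUmeas).aestronglyMeasurable bu
      (ae_of_all _ fun ω => hfbd a (U ω))
  have hformula : ∫ ω, (∏ t, incRatio δ p (A t ω)) * f (fun s => A s ω) (U ω) ∂P
      = ∑ a, (∏ t, incWeight δ p (a t)) * ∫ ω, f a (U ω) ∂P := by
    refine (integral_eq_sum_measureReal_mul_of_indepFun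
      (indepFun_of_iIndepFun_fam hindep hAmeas hUmeas) (measurable_pi_lambda _ hAmeas) hUmeas
      (g := fun a e => (∏ t, incRatio δ p (a t)) * f a e) (fun a => (hf_slice a).const_mul _)
      fun a => (hY_int a).const_mul _).trans (Finset.sum_congr rfl fun a _ => ?_)
    rw [iIndepFun.measureReal_preimage_singleton_eq_prod (iIndepFun_of_iIndepFun_fam hindep) a,
      integral_const_mul, ← mul_assoc, ← Finset.prod_mul_distrib]
    simp only [measureReal_preimage_bool (hAmeas _) hp0.le (hAp _), ite_mul_incRatio]
  have hsum : ∑ a : Fin T → Bool, ∏ t, incWeight δ p (a t) = 1 :=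
    Fintype.sum_pi_prod_eq_one (sum_incWeight (by nlinarith))
  have hmean_bound (a : Fin T → Bool) : |∫ ω, f a (U ω) ∂P| ≤ bu := by
    simpa using norm_integral_le_of_norm_le_const (μ := P) (f := fun ω => f a (U ω))
      (ae_of_all _ fun ω => hfbd a (U ω))
  have hbound : |∑ a, (∏ t, incWeight δ p (a t)) * ∫ ω, f a (U ω) ∂P| ≤ bu :=
    abs_le.2 ((convex_Icc (-bu) bu).sum_mem
      (fun a _ => Finset.prod_nonneg fun t _ => incWeight_nonneg hδ.le hp0.le hp1.le (a t)) hsum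
      fun a _ => abs_le.1 (hmean_bound a))
  exact ⟨hformula, hsum, (congrArg abs hformula).trans_le hbound⟩

/-- g-formula representation of the incremental-effect IPW estimator:
`E[ψ̂_inc] = Σ_ā (∏_t q_δ(a_t))·E[Y^ā]` with `q_δ(a) = (aδp + (1−a)(1−p))/(δp+1−p)`;
the weights sum to one, and consequently `|E[ψ̂_inc]| ≤ b_u`. -/
theorem inc_gformula
    {Ω : Type*} {E : Type} [MeasurableSpace Ω] [MeasurableSpace E]
    (P : Measure Ω) [IsProbabilityMeasure P]
    (T : ℕ) (hT : 1 ≤ T)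
    (p : ℝ) (hp : p ∈ Set.Ioo (0:ℝ) 1)
    (A : Fin T → Ω → Bool) (U : Ω → E)
    (hAmeas : ∀ t, Measurable (A t)) (hUmeas : Measurable U)
    (hindep : iIndepFun (m := fun i => CodMeas E T i) (fam T A U) P)
    (hAp : ∀ t, P {ω | A t ω = true} = ENNReal.ofReal p)
    (f : (Fin T → Bool) → E → ℝ)
    (hf : Measurable (fun q : (Fin T → Bool) × E => f q.1 q.2))
    (bu : ℝ) (hbu : 0 < bu) (hfbd : ∀ a e, |f a e| ≤ bu)
    (δ : ℝ) (hδ : 0 < δ) :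
    (∫ ω, (∏ t, (if A t ω then δ else 1) / (δ * p + 1 - p)) * f (fun s => A s ω) (U ω) ∂P
      = ∑ a : Fin T → Bool,
          (∏ t, (if a t then δ * p else 1 - p) / (δ * p + 1 - p)) * ∫ ω, f a (U ω) ∂P)
    ∧ (∑ a : Fin T → Bool, ∏ t, (if a t then δ * p else 1 - p) / (δ * p + 1 - p) = 1)
    ∧ |∫ ω, (∏ t, (if A t ω then δ else 1) / (δ * p + 1 - p)) * f (fun s => A s ω) (U ω) ∂P|
        ≤ bu :=
  inc_gformula_general P T p hp A U hAmeas hUmeas hindep hAp f hf bu hfbd δ hδ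
end
end

section
/- In the simplified infinite-time-horizon setting, for every treatment sequence ā ∈ {0,1}^T: E[ψ̂_cipw(ā)²] = (∏_{t=1}^T 1/π(a_t))·E[(Y^ā)²]. In particular, the always-treated IPW estimator has Var(ψ̂_at) = (1/p)^T·E[(Y^{1̄})²] − (E[Y^{1̄}])². -/
open MeasureTheory ProbabilityTheory

noncomputable section

/-! The product of indicators vanishes unless `A = ā`, so inside the estimator `f (A, U)` may be
replaced by `f (ā, U)`. Indicators are idempotent, so the `k`-th power of the estimator is
`∏ₜ 1{Aₜ = aₜ} / π(aₜ)ᵏ · f(ā, U)ᵏ`, and independence of `(A₁, …, A_T, U)` factors its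
expectation into `∏ₜ π(aₜ) / π(aₜ)ᵏ · E[(Y^ā)ᵏ]`. Take `k = 2` for the second moment, and
`k = 1` (unbiasedness) together with `k = 2` at `ā = 1̄` for the variance. -/

lemma prod_indicator_div_mul_eq {ι β K : Type*} [Fintype ι] [DecidableEq β] [Field K]
    (x a : ι → β) (c : ι → K) (F : (ι → β) → K) :
    (∏ i, (if x i = a i then (1 : K) else 0) / c i) * F x
      = (∏ i, (if x i = a i then (1 : K) else 0) / c i) * F a := by
  by_cases hxa : x = a
  · rw [hxa]
  · obtain ⟨i, hi⟩ := Function.ne_iff.mp hxa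
    rw [Finset.prod_eq_zero (Finset.mem_univ i) (by simp [hi]), zero_mul, zero_mul]

lemma abs_prod_indicator_div_le {ι β : Type*} [Fintype ι] [DecidableEq β]
    (x a : ι → β) {c : ι → ℝ} (hc : ∀ i, 0 ≤ c i) :
    |∏ i, (if x i = a i then (1 : ℝ) else 0) / c i| ≤ ∏ i, 1 / c i := by
  rw [Finset.abs_prod]
  refine Finset.prod_le_prod (fun _ _ => abs_nonneg _) fun i _ => ?_
  have hind : 0 ≤ (if x i = a i then (1 : ℝ) else 0) ∧
      (if x i = a i then (1 : ℝ) else 0) ≤ 1 := by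
    split_ifs <;> norm_num
  rw [abs_of_nonneg (div_nonneg hind.1 (hc i))]
  exact div_le_div_of_nonneg_right hind.2 (hc i)

section IPW

variable {Ω : Type*} {E : Type} [MeasurableSpace Ω] [MeasurableSpace E] {P : Measure Ω}
  {T : ℕ} {A : Fin T → Ω → Bool} {U : Ω → E}

lemma integral_prod_mul_of_iIndepFun_fam
    (hAmeas : ∀ t, Measurable (A t)) (hUmeas : Measurable U)
    (hindep : iIndepFun (m := fun i => CodMeas E T i) (fam T A U) P)
    (w : Fin T → Bool → ℝ) {g : E → ℝ} (hg : Measurable g) :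
    ∫ ω, (∏ t, w t (A t ω)) * g (U ω) ∂P
      = (∏ t, ∫ ω, w t (A t ω) ∂P) * ∫ ω, g (U ω) ∂P := by
  let G : (i : Option (Fin T)) → Cod E T i → ℝ
    | none => g
    | some t => w t
  have hfam : ∀ i, Measurable (fam T A U i)
    | none => hUmeas
    | some t => hAmeas t
  have hG : ∀ i, Measurable (G i)
    | none => hg
    | some _ => measurable_from_top
  have hprod : ∫ ω, g (U ω) * ∏ t, w t (A t ω) ∂P
      = (∫ ω, g (U ω) ∂P) * ∏ t, ∫ ω, w t (A t ω) ∂P := by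
    have h := hindep.integral_fun_prod_comp (f := G)
      (fun i => (hfam i).aemeasurable) (fun i => (hG i).aestronglyMeasurable)
    simp only [Fintype.prod_option] at h
    exact h
  simpa only [mul_comm (g _), mul_comm (∫ ω, g (U ω) ∂P)] using hprod

lemma memLp_prod_indicator_div_mul [IsFiniteMeasure P] (r : ENNReal)
    (hAmeas : ∀ t, Measurable (A t)) (hUmeas : Measurable U)
    {f : (Fin T → Bool) → E → ℝ} (hf : Measurable (fun q : (Fin T → Bool) × E => f q.1 q.2))
    {bu : ℝ} (hfbd : ∀ a e, |f a e| ≤ bu) (a : Fin T → Bool) {c : Fin T → ℝ}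
    (hc : ∀ t, 0 ≤ c t) :
    MemLp (fun ω => (∏ t, (if A t ω = a t then (1 : ℝ) else 0) / c t) *
      f (fun s => A s ω) (U ω)) r P := by
  have hmeas : Measurable fun ω => (∏ t, (if A t ω = a t then (1 : ℝ) else 0) / c t) *
      f (fun s => A s ω) (U ω) :=
    (Finset.measurable_fun_prod _ fun t _ =>
      (measurable_from_top (f := fun b => (if b = a t then (1 : ℝ) else 0) / c t)).comp
        (hAmeas t)).fun_mul
      (hf.comp ((measurable_pi_lambda _ hAmeas).prodMk hUmeas))
  refine MemLp.of_bound hmeas.aestronglyMeasurable ((∏ t, 1 / c t) * bu)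
    (Filter.Eventually.of_forall fun ω => ?_)
  rw [Real.norm_eq_abs, abs_mul]
  exact mul_le_mul (abs_prod_indicator_div_le _ a hc) (hfbd _ _) (abs_nonneg _)
    (Finset.prod_nonneg fun t _ => one_div_nonneg.mpr (hc t))

variable [IsProbabilityMeasure P] {p : ℝ}

lemma integral_indicator_eq_of_prob_eq (hAmeas : ∀ t, Measurable (A t))
    (hAp : ∀ t, P {ω | A t ω = true} = ENNReal.ofReal p) (hp : 0 ≤ p) (t : Fin T) (c : Bool) :
    ∫ ω, (if A t ω = c then (1 : ℝ) else 0) ∂P = if c then p else 1 - p := by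
  have hmeas : ∀ c : Bool, MeasurableSet {ω | A t ω = c} :=
    fun c => hAmeas t (measurableSet_singleton c)
  have htrue : P.real {ω | A t ω = true} = p := by
    rw [measureReal_def, hAp t, ENNReal.toReal_ofReal hp]
  have hind : (fun ω => if A t ω = c then (1 : ℝ) else 0) = {ω | A t ω = c}.indicator 1 := by
    ext ω; simp [Set.indicator_apply]
  rw [hind, integral_indicator_one (hmeas c)]
  cases c
  · have hcompl : {ω | A t ω = false} = {ω | A t ω = true}ᶜ := by ext; simp
    rw [hcompl, probReal_compl_eq_one_sub (hmeas true), htrue]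
    rfl
  · exact htrue

theorem integral_cipw_pow (hAmeas : ∀ t, Measurable (A t)) (hUmeas : Measurable U)
    (hindep : iIndepFun (m := fun i => CodMeas E T i) (fam T A U) P)
    (hAp : ∀ t, P {ω | A t ω = true} = ENNReal.ofReal p) (hp : 0 ≤ p)
    {f : (Fin T → Bool) → E → ℝ} (a : Fin T → Bool) (hfa : Measurable (f a))
    {k : ℕ} (hk : k ≠ 0) :
    ∫ ω, ((∏ t, (if A t ω = a t then (1 : ℝ) else 0) / (if a t then p else 1 - p)) *
        f (fun s => A s ω) (U ω)) ^ k ∂P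
      = (∏ t, (if a t then p else 1 - p) / (if a t then p else 1 - p) ^ k) *
        ∫ ω, f a (U ω) ^ k ∂P := by
  have hpow : ∀ ω, ((∏ t, (if A t ω = a t then (1 : ℝ) else 0) / (if a t then p else 1 - p)) *
        f (fun s => A s ω) (U ω)) ^ k
      = (∏ t, (if A t ω = a t then (1 : ℝ) else 0) / (if a t then p else 1 - p) ^ k) *
        f a (U ω) ^ k := by
    intro ω
    rw [prod_indicator_div_mul_eq (fun s => A s ω) a _ (f · (U ω)), mul_pow, ← Finset.prod_pow]
    congr 1
    refine Finset.prod_congr rfl fun t _ => ?_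
    rw [div_pow, ite_pow, one_pow, zero_pow hk]
  simp_rw [hpow]
  rw [integral_prod_mul_of_iIndepFun_fam hAmeas hUmeas hindep
    (fun t b => (if b = a t then (1 : ℝ) else 0) / (if a t then p else 1 - p) ^ k)
    (hfa.pow_const k)]
  congr 1
  refine Finset.prod_congr rfl fun t _ => ?_
  rw [integral_div, integral_indicator_eq_of_prob_eq hAmeas hAp hp]

end IPW

theorem cipw_second_moment_general
    {Ω : Type*} {E : Type} [MeasurableSpace Ω] [MeasurableSpace E]
    (P : Measure Ω) [IsProbabilityMeasure P]
    (T : ℕ)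
    (p : ℝ) (hp : p ∈ Set.Ioo (0:ℝ) 1)
    (A : Fin T → Ω → Bool) (U : Ω → E)
    (hAmeas : ∀ t, Measurable (A t)) (hUmeas : Measurable U)
    (hindep : iIndepFun (m := fun i => CodMeas E T i) (fam T A U) P)
    (hAp : ∀ t, P {ω | A t ω = true} = ENNReal.ofReal p)
    (f : (Fin T → Bool) → E → ℝ)
    (hf : Measurable (fun q : (Fin T → Bool) × E => f q.1 q.2))
    (bu : ℝ) (hfbd : ∀ a e, |f a e| ≤ bu)
    :
    (∀ a : Fin T → Bool,
      ∫ ω, ((∏ t, (if A t ω = a t then (1:ℝ) else 0) / (if a t then p else 1 - p)) *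
          f (fun s => A s ω) (U ω)) ^ 2 ∂P
        = (∏ t, 1 / (if a t then p else 1 - p)) * ∫ ω, (f a (U ω)) ^ 2 ∂P)
    ∧ variance (fun ω =>
          (∏ t, (if A t ω then (1:ℝ) else 0) / p) * f (fun s => A s ω) (U ω)) P
        = (1 / p) ^ T * (∫ ω, (f (fun _ => true) (U ω)) ^ 2 ∂P)
          - (∫ ω, f (fun _ => true) (U ω) ∂P) ^ 2 := by
  have hfa : ∀ a, Measurable (f a) := fun a => hf.comp measurable_prodMk_left
  have second_moment : ∀ a : Fin T → Bool,
      ∫ ω, ((∏ t, (if A t ω = a t then (1:ℝ) else 0) / (if a t then p else 1 - p)) *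
          f (fun s => A s ω) (U ω)) ^ 2 ∂P
        = (∏ t, 1 / (if a t then p else 1 - p)) * ∫ ω, (f a (U ω)) ^ 2 ∂P := by
    intro a
    rw [integral_cipw_pow hAmeas hUmeas hindep hAp hp.1.le a (hfa a) two_ne_zero]
    congr 1
    exact Finset.prod_congr rfl fun t _ => by rw [sq, div_self_mul_self', one_div]
  have mean_always_treated := integral_cipw_pow hAmeas hUmeas hindep hAp hp.1.le (fun _ => true)
    (hfa _) one_ne_zero
  simp only [if_true, pow_one, div_self hp.1.ne', Finset.prod_const_one, one_mul]
    at mean_always_treated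
  have second_moment_always_treated := second_moment fun _ => true
  simp only [if_true, Finset.prod_const, Finset.card_univ, Fintype.card_fin]
    at second_moment_always_treated
  refine ⟨second_moment, ?_⟩
  rw [variance_eq_sub (memLp_prod_indicator_div_mul 2 hAmeas hUmeas hf hfbd (fun _ => true)
    fun _ => hp.1.le), mean_always_treated, ← second_moment_always_treated]
  rfl

/-- Second moment of the deterministic-regime IPW estimator:
`E[ψ̂_cipw(ā)²] = (∏_t 1/π(a_t))·E[(Y^ā)²]`; in particular
`Var(ψ̂_at) = (1/p)^T·E[(Y^{1̄})²] − (E[Y^{1̄}])²`. -/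
theorem cipw_second_moment
    {Ω : Type*} {E : Type} [MeasurableSpace Ω] [MeasurableSpace E]
    (P : Measure Ω) [IsProbabilityMeasure P]
    (T : ℕ) (hT : 1 ≤ T)
    (p : ℝ) (hp : p ∈ Set.Ioo (0:ℝ) 1)
    (A : Fin T → Ω → Bool) (U : Ω → E)
    (hAmeas : ∀ t, Measurable (A t)) (hUmeas : Measurable U)
    (hindep : iIndepFun (m := fun i => CodMeas E T i) (fam T A U) P)
    (hAp : ∀ t, P {ω | A t ω = true} = ENNReal.ofReal p)
    (f : (Fin T → Bool) → E → ℝ)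
    (hf : Measurable (fun q : (Fin T → Bool) × E => f q.1 q.2))
    (bu : ℝ) (hbu : 0 < bu) (hfbd : ∀ a e, |f a e| ≤ bu)
    :
    (∀ a : Fin T → Bool,
      ∫ ω, ((∏ t, (if A t ω = a t then (1:ℝ) else 0) / (if a t then p else 1 - p)) *
          f (fun s => A s ω) (U ω)) ^ 2 ∂P
        = (∏ t, 1 / (if a t then p else 1 - p)) * ∫ ω, (f a (U ω)) ^ 2 ∂P)
    ∧ variance (fun ω =>
          (∏ t, (if A t ω then (1:ℝ) else 0) / p) * f (fun s => A s ω) (U ω)) P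
        = (1 / p) ^ T * (∫ ω, (f (fun _ => true) (U ω)) ^ 2 ∂P)
          - (∫ ω, f (fun _ => true) (U ω) ∂P) ^ 2 :=
  cipw_second_moment_general P T p hp A U hAmeas hUmeas hindep hAp f hf bu hfbd
end
end

section
/- In the simplified infinite-time-horizon setting, for every δ > 0 the second moment of the incremental-effect IPW estimator satisfies the exact decomposition E[ψ̂_inc²] = Σ_{ā ∈ {0,1}^T} (∏_{t=1}^T (1{a_t = 1}·δ²p + 1{a_t = 0}·(1 − p))/(δp + 1 − p)²)·E[(Y^ā)²]. -/
open MeasureTheory ProbabilityTheory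

noncomputable section

/-! On the event `{(A₁, …, A_T) = ā}` the estimator equals `w(ā) · Y^ā` with
`w(ā) = ∏_t (δ^{a_t} / (δp + 1 − p))`, so its square is `∑_ā w(ā)² · 1{A = ā} · (Y^ā)²`.
Independence of `(A₁, …, A_T, U)` factors `E[1{A = ā} · f(ā, U)²]` as
`∏_t P(A_t = a_t) · E[(Y^ā)²]`, and `w(ā)² · ∏_t π(a_t)` is the stated weight. -/

lemma Fintype.apply_eq_sum_prod_boole_mul {ι β M : Type*} [Fintype ι] [DecidableEq ι]
    [Fintype β] [DecidableEq β] [CommSemiring M] (h : (ι → β) → M) (b : ι → β) :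
    h b = ∑ a, (∏ i, if b i = a i then 1 else 0) * h a := by
  simp only [Fintype.prod_boole, ← funext_iff, ite_mul, one_mul, zero_mul, Fintype.sum_ite_eq]

lemma measureReal_setOf_eq_bool {Ω : Type*} [MeasurableSpace Ω] {P : Measure Ω}
    [IsProbabilityMeasure P] {X : Ω → Bool} (hX : Measurable X) {p : ℝ} (hp : 0 ≤ p)
    (hXp : P {ω | X ω = true} = ENNReal.ofReal p) (b : Bool) :
    P.real {ω | X ω = b} = if b then p else 1 - p := by
  have htrue : P.real {ω | X ω = true} = p := by
    rw [measureReal_def, hXp, ENNReal.toReal_ofReal hp]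
  cases b with
  | true => exact htrue
  | false =>
    have hcompl : {ω | X ω = false} = {ω | X ω = true}ᶜ := by ext; simp
    have hs : MeasurableSet {ω | X ω = true} := hX (measurableSet_singleton true)
    rw [hcompl, probReal_compl_eq_one_sub hs, htrue]
    rfl

lemma integral_ite_eq_measureReal {Ω β : Type*} [MeasurableSpace Ω] [MeasurableSpace β]
    [MeasurableSingletonClass β] [DecidableEq β] {P : Measure Ω} {X : Ω → β} (hX : Measurable X) (b : β) :
    ∫ ω, (if X ω = b then (1 : ℝ) else 0) ∂P = P.real {ω | X ω = b} := by
  have hs : MeasurableSet {ω | X ω = b} := hX (measurableSet_singleton b)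
  rw [← integral_indicator_one hs]
  simp only [Set.indicator_apply, Set.mem_ofPred_eq, Pi.one_apply]

lemma MeasureTheory.Integrable.prod_boole_mul {Ω ι β : Type*} [MeasurableSpace Ω] [Fintype ι]
    [MeasurableSpace β] [MeasurableSingletonClass β] [DecidableEq β] {P : Measure Ω} {X : ι → Ω → β}
    (hX : ∀ i, Measurable (X i)) {Y : Ω → ℝ} (hY : Integrable Y P) (x : ι → β) :
    Integrable (fun ω => (∏ i, if X i ω = x i then 1 else 0) * Y ω) P := by
  refine hY.bdd_mul (c := 1) (Finset.measurable_prod _ fun i _ => ?_).aestronglyMeasurable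
    (ae_of_all _ fun ω => ?_)
  · exact Measurable.ite (hX i (measurableSet_singleton _)) measurable_const measurable_const
  · rw [Fintype.prod_boole]
    split_ifs <;> simp

section JointFamily

variable {Ω : Type*} {E : Type} [MeasurableSpace Ω] [MeasurableSpace E] {T : ℕ}
  {A : Fin T → Ω → Bool} {U : Ω → E}

def Cod.elim {M : Type*} (g : E → M) (h : Fin T → Bool → M) : (i : Option (Fin T)) → Cod E T i → M
  | none => g
  | some t => h t

lemma Cod.measurable_elim {M : Type*} [MeasurableSpace M] {g : E → M} (hg : Measurable g)
    (h : Fin T → Bool → M) : ∀ i, Measurable (Cod.elim g h i)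
  | none => hg
  | some t => show Measurable (h t) from .of_discrete

lemma measurable_fam (hA : ∀ t, Measurable (A t)) (hU : Measurable U) :
    ∀ i, Measurable (fam T A U i)
  | none => hU
  | some t => hA t

lemma integral_prod_boole_mul_comp {P : Measure Ω}
    (hindep : iIndepFun (m := fun i => CodMeas E T i) (fam T A U) P)
    (hA : ∀ t, Measurable (A t)) (hU : Measurable U) {g : E → ℝ} (hg : Measurable g)
    (a : Fin T → Bool) :
    ∫ ω, (∏ t, if A t ω = a t then 1 else 0) * g (U ω) ∂P
      = (∏ t, P.real {ω | A t ω = a t}) * ∫ ω, g (U ω) ∂P := by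
  have := hindep.integral_fun_prod_comp (f := Cod.elim g fun t c => if c = a t then 1 else 0)
    (fun i => (measurable_fam hA hU i).aemeasurable)
    (fun i => (Cod.measurable_elim hg _ i).aestronglyMeasurable)
  simpa [Fintype.prod_option, Cod.elim, fam, mul_comm, integral_ite_eq_measureReal (hA _)]
    using this

end JointFamily

theorem inc_second_moment_decomposition_general
    {Ω : Type*} {E : Type} [MeasurableSpace Ω] [MeasurableSpace E]
    (P : Measure Ω) [IsProbabilityMeasure P]
    (T : ℕ)
    (p : ℝ) (hp : p ∈ Set.Ioo (0:ℝ) 1)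
    (A : Fin T → Ω → Bool) (U : Ω → E)
    (hAmeas : ∀ t, Measurable (A t)) (hUmeas : Measurable U)
    (hindep : iIndepFun (m := fun i => CodMeas E T i) (fam T A U) P)
    (hAp : ∀ t, P {ω | A t ω = true} = ENNReal.ofReal p)
    (f : (Fin T → Bool) → E → ℝ)
    (hf : Measurable (fun q : (Fin T → Bool) × E => f q.1 q.2))
    (bu : ℝ) (hfbd : ∀ a e, |f a e| ≤ bu)
    (δ : ℝ) :
    ∫ ω, ((∏ t, (if A t ω then δ else 1) / (δ * p + 1 - p)) * f (fun s => A s ω) (U ω)) ^ 2 ∂P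
      = ∑ a : Fin T → Bool,
          (∏ t, (if a t then δ ^ 2 * p else 1 - p) / (δ * p + 1 - p) ^ 2) *
            ∫ ω, (f a (U ω)) ^ 2 ∂P := by
  set w : (Fin T → Bool) → ℝ := fun a => ∏ t, (if a t then δ else 1) / (δ * p + 1 - p)
  have hfa : ∀ a, Measurable fun e => f a e ^ 2 :=
    fun a => (hf.comp (measurable_const.prodMk measurable_id)).pow_const 2
  have hfaU : ∀ a, Integrable (fun ω => f a (U ω) ^ 2) P := fun a =>
    .of_bound ((hfa a).comp hUmeas).aestronglyMeasurable (bu ^ 2) (ae_of_all _ fun ω => by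
      simpa using pow_le_pow_left₀ (abs_nonneg _) (hfbd a (U ω)) 2)
  calc ∫ ω, (w (fun s => A s ω) * f (fun s => A s ω) (U ω)) ^ 2 ∂P
      = ∫ ω, ∑ a, w a ^ 2 * ((∏ t, if A t ω = a t then 1 else 0) * f a (U ω) ^ 2) ∂P := by
        congr 1 with ω
        rw [Fintype.apply_eq_sum_prod_boole_mul (fun a => (w a * f a (U ω)) ^ 2)]
        congr 1 with a
        ring
    _ = ∑ a, w a ^ 2 * ((∏ t, if a t then p else 1 - p) * ∫ ω, f a (U ω) ^ 2 ∂P) := by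
        rw [integral_finsetSum _ fun a _ => ((hfaU a).prod_boole_mul hAmeas a).const_mul _]
        simp only [integral_const_mul, integral_prod_boole_mul_comp hindep hAmeas hUmeas (hfa _),
          measureReal_setOf_eq_bool (hAmeas _) hp.1.le (hAp _)]
    _ = _ := by
        congr 1 with a
        rw [← mul_assoc, ← Finset.prod_pow, ← Finset.prod_mul_distrib]
        congr 1
        exact Finset.prod_congr rfl fun t _ => by split_ifs <;> rw [div_pow] <;> ring

/-- Exact second-moment decomposition of the incremental-effect IPW estimator:
`E[ψ̂_inc²] = Σ_ā (∏_t (1{a_t=1}δ²p + 1{a_t=0}(1−p))/(δp+1−p)²)·E[(Y^ā)²]`. -/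
theorem inc_second_moment_decomposition
    {Ω : Type*} {E : Type} [MeasurableSpace Ω] [MeasurableSpace E]
    (P : Measure Ω) [IsProbabilityMeasure P]
    (T : ℕ) (hT : 1 ≤ T)
    (p : ℝ) (hp : p ∈ Set.Ioo (0:ℝ) 1)
    (A : Fin T → Ω → Bool) (U : Ω → E)
    (hAmeas : ∀ t, Measurable (A t)) (hUmeas : Measurable U)
    (hindep : iIndepFun (m := fun i => CodMeas E T i) (fam T A U) P)
    (hAp : ∀ t, P {ω | A t ω = true} = ENNReal.ofReal p)
    (f : (Fin T → Bool) → E → ℝ)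
    (hf : Measurable (fun q : (Fin T → Bool) × E => f q.1 q.2))
    (bu : ℝ) (hbu : 0 < bu) (hfbd : ∀ a e, |f a e| ≤ bu)
    (δ : ℝ) (hδ : 0 < δ) :
    ∫ ω, ((∏ t, (if A t ω then δ else 1) / (δ * p + 1 - p)) * f (fun s => A s ω) (U ω)) ^ 2 ∂P
      = ∑ a : Fin T → Bool,
          (∏ t, (if a t then δ ^ 2 * p else 1 - p) / (δ * p + 1 - p) ^ 2) *
            ∫ ω, (f a (U ω)) ^ 2 ∂P :=
  inc_second_moment_decomposition_general P T p hp A U hAmeas hUmeas hindep hAp f hf bu hfbd δ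
end
end

section
/- In the simplified infinite-time-horizon setting, for every δ > 0: Σ_{ā ∈ {0,1}^T} ∏_{t=1}^T (1{a_t = 1}·δ²p + 1{a_t = 0}·(1 − p))/(δp + 1 − p)² = ((δ²p + 1 − p)/(δp + 1 − p)²)^T, and consequently E[ψ̂_inc²] ≤ b_u²·((δ²p + 1 − p)/(δp + 1 − p)²)^T. -/
/-! The incremental weight factorises over time as `∏ₜ w(Aₜ)` with `w 1 = δ/(δp+1-p)` and
`w 0 = 1/(δp+1-p)`. Bounding `|f|` by `b_u` and using independence of the `Aₜ`,
`E[ψ̂_inc²] ≤ b_u² ∏ₜ E[w(Aₜ)²] = b_u² ((δ²p+1-p)/(δp+1-p)²)^T`; the weight identity is the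
expansion of the same product `(E[w(A)²])^T` as a sum over `{0,1}^T`. -/

open MeasureTheory ProbabilityTheory

noncomputable section

open Finset

lemma sum_prod_bool_eq_pow {R ι : Type*} [CommSemiring R] [Fintype ι] [DecidableEq ι]
    (g : Bool → R) :
    ∑ a : ι → Bool, ∏ i, g (a i) = (g true + g false) ^ Fintype.card ι := by
  rw [← Fintype.prod_sum (fun _ b => g b), prod_const, Fintype.sum_bool, card_univ]

lemma iIndepFun_fam_some {Ω : Type*} {E : Type} [MeasurableSpace Ω] [MeasurableSpace E]
    {P : Measure Ω} {T : ℕ} {A : Fin T → Ω → Bool} {U : Ω → E}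
    (h : iIndepFun (m := fun i => CodMeas E T i) (fam T A U) P) : iIndepFun A P :=
  h.precomp (g := some) (Option.some_injective _)

lemma integral_comp_bool {Ω : Type*} [MeasurableSpace Ω] {P : Measure Ω}
    [IsProbabilityMeasure P]
    {X : Ω → Bool} (hX : Measurable X) {p : ℝ} (hp : 0 ≤ p)
    (hXp : P {ω | X ω = true} = ENNReal.ofReal p) (g : Bool → ℝ) :
    ∫ ω, g (X ω) ∂P = p * g true + (1 - p) * g false := by
  have htrue : P.real (X ⁻¹' {true}) = p := by
    rw [measureReal_def, ← ENNReal.toReal_ofReal hp, ← hXp]; rfl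
  have hfalse : P.real (X ⁻¹' {false}) = 1 - p := by
    rw [← htrue, ← probReal_compl_eq_one_sub (hX (measurableSet_singleton true))]
    congr 1; ext ω; simp
  rw [← integral_map hX.aemeasurable (measurable_of_finite g).aestronglyMeasurable,
    integral_fintype .of_finite, Fintype.sum_bool,
    map_measureReal_apply hX (measurableSet_singleton _),
    map_measureReal_apply hX (measurableSet_singleton _), htrue, hfalse, smul_eq_mul, smul_eq_mul]

lemma integrable_comp_of_finite {Ω α : Type*} [MeasurableSpace Ω] [MeasurableSpace α]
    [Finite α] [MeasurableSingletonClass α] {P : Measure Ω} [IsFiniteMeasure P]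
    {V : Ω → α} (hV : Measurable V) (G : α → ℝ) : Integrable (fun ω => G (V ω)) P :=
  (Integrable.of_finite (μ := P.map V) (f := G)).comp_measurable hV

theorem inc_second_moment_bound_general
    {Ω : Type*} {E : Type} [MeasurableSpace Ω] [MeasurableSpace E]
    (P : Measure Ω) [IsProbabilityMeasure P]
    (T : ℕ)
    (p : ℝ) (hp : p ∈ Set.Ioo (0:ℝ) 1)
    (A : Fin T → Ω → Bool) (U : Ω → E)
    (hAmeas : ∀ t, Measurable (A t))
    (hindep : iIndepFun (m := fun i => CodMeas E T i) (fam T A U) P)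
    (hAp : ∀ t, P {ω | A t ω = true} = ENNReal.ofReal p)
    (f : (Fin T → Bool) → E → ℝ)
    (bu : ℝ) (hfbd : ∀ a e, |f a e| ≤ bu)
    (δ : ℝ) :
    (∑ a : Fin T → Bool, ∏ t, (if a t then δ ^ 2 * p else 1 - p) / (δ * p + 1 - p) ^ 2
      = ((δ ^ 2 * p + (1 - p)) / (δ * p + 1 - p) ^ 2) ^ T)
    ∧ ∫ ω, ((∏ t, (if A t ω then δ else 1) / (δ * p + 1 - p)) *
          f (fun s => A s ω) (U ω)) ^ 2 ∂P
        ≤ bu ^ 2 * ((δ ^ 2 * p + (1 - p)) / (δ * p + 1 - p) ^ 2) ^ T := by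
  refine ⟨(sum_prod_bool_eq_pow fun b =>
      (if b then δ ^ 2 * p else 1 - p) / (δ * p + 1 - p) ^ 2).trans ?_, ?_⟩
  · simp only [if_true, Bool.false_eq_true, if_false, ← add_div, Fintype.card_fin]
  set w : Bool → ℝ := fun b => (if b then δ else 1) / (δ * p + 1 - p)
  have weight_sq_mean : ∀ t, ∫ ω, w (A t ω) ^ 2 ∂P
      = (δ ^ 2 * p + (1 - p)) / (δ * p + 1 - p) ^ 2 := fun t => by
    rw [integral_comp_bool (hAmeas t) hp.1.le (hAp t) fun b => w b ^ 2]
    simp only [w, if_true, Bool.false_eq_true, if_false, div_pow]; ring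
  have hpointwise : ∀ ω, ((∏ t, w (A t ω)) * f (fun s => A s ω) (U ω)) ^ 2
      ≤ bu ^ 2 * ∏ t, w (A t ω) ^ 2 := fun ω => by
    rw [mul_pow, prod_pow, mul_comm (bu ^ 2)]
    exact mul_le_mul_of_nonneg_left (sq_le_sq' (abs_le.1 (hfbd _ _)).1 (abs_le.1 (hfbd _ _)).2)
      (sq_nonneg _)
  calc ∫ ω, ((∏ t, w (A t ω)) * f (fun s => A s ω) (U ω)) ^ 2 ∂P
      ≤ ∫ ω, bu ^ 2 * ∏ t, w (A t ω) ^ 2 ∂P :=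
        integral_mono_of_nonneg (.of_forall fun _ => sq_nonneg _)
          ((integrable_comp_of_finite (measurable_pi_lambda _ hAmeas)
            (fun a => ∏ t, w (a t) ^ 2)).const_mul _) (.of_forall hpointwise)
    _ = bu ^ 2 * ∏ t, ∫ ω, w (A t ω) ^ 2 ∂P := by
        rw [integral_const_mul, (iIndepFun_fam_some hindep).integral_fun_prod_comp
          (f := fun _ b => w b ^ 2) (fun t => (hAmeas t).aemeasurable)
          (fun _ => (measurable_of_finite _).aestronglyMeasurable)]
    _ = bu ^ 2 * ((δ ^ 2 * p + (1 - p)) / (δ * p + 1 - p) ^ 2) ^ T := by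
        simp only [weight_sq_mean, prod_const, card_univ, Fintype.card_fin]

/-- The incremental second-moment weights sum to `((δ²p + 1 − p)/(δp + 1 − p)²)^T`, and
consequently `E[ψ̂_inc²] ≤ b_u²·((δ²p + 1 − p)/(δp + 1 − p)²)^T`. -/
theorem inc_second_moment_bound
    {Ω : Type*} {E : Type} [MeasurableSpace Ω] [MeasurableSpace E]
    (P : Measure Ω) [IsProbabilityMeasure P]
    (T : ℕ) (hT : 1 ≤ T)
    (p : ℝ) (hp : p ∈ Set.Ioo (0:ℝ) 1)
    (A : Fin T → Ω → Bool) (U : Ω → E)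
    (hAmeas : ∀ t, Measurable (A t)) (hUmeas : Measurable U)
    (hindep : iIndepFun (m := fun i => CodMeas E T i) (fam T A U) P)
    (hAp : ∀ t, P {ω | A t ω = true} = ENNReal.ofReal p)
    (f : (Fin T → Bool) → E → ℝ)
    (hf : Measurable (fun q : (Fin T → Bool) × E => f q.1 q.2))
    (bu : ℝ) (hbu : 0 < bu) (hfbd : ∀ a e, |f a e| ≤ bu)
    (δ : ℝ) (hδ : 0 < δ) :
    (∑ a : Fin T → Bool, ∏ t, (if a t then δ ^ 2 * p else 1 - p) / (δ * p + 1 - p) ^ 2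
      = ((δ ^ 2 * p + (1 - p)) / (δ * p + 1 - p) ^ 2) ^ T)
    ∧ ∫ ω, ((∏ t, (if A t ω then δ else 1) / (δ * p + 1 - p)) *
          f (fun s => A s ω) (U ω)) ^ 2 ∂P
        ≤ bu ^ 2 * ((δ ^ 2 * p + (1 - p)) / (δ * p + 1 - p) ^ 2) ^ T :=
  inc_second_moment_bound_general P T p hp A U hAmeas hindep hAp f bu hfbd δ
end
end
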